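/- arXiv:0905.0434 — 2 statements merged into one kernel-verified Lean document; each statement's English description precedes it below -/
import Mathlib

section
/- Let F be a tree with vertex set {1,…,r}. There exists a constant C, depending on F only, such that for every probability space (S,μ), every integrable symmetric non-negative kernel W : S × S → [0,∞), and every bounded measurable function f : S → ℝ, one has |t⁺(F,f,W)| ≤ C · ‖f‖_∞. -/
open MeasureTheory

/-- The marginal `λ_W(x) = ∫ W(x,y) dμ(y)` of a kernel `W`. -/
noncomputable def marginal {S : Type*} [MeasurableSpace S] (μ : Measure S)
    (W : S × S → ℝ) (x : S) : ℝ :=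
  ∫ y, W (x, y) ∂μ

/-- `t⁺(F,f,W) = ∫_{S^r} (∑_k f(x_k)) ⬝ ∏_{ij ∈ E(F)} W(x_i,x_j) ⬝ ∏_k e^{−λ_W(x_k)} dμ^r`. -/
noncomputable def tIsolPlus {S : Type*} [MeasurableSpace S] (μ : Measure S) {r : ℕ}
    (F : SimpleGraph (Fin r)) [DecidableRel F.Adj] (f : S → ℝ)
    (W : S × S → ℝ) : ℝ :=
  ∫ x : Fin r → S,
    (∑ k : Fin r, f (x k)) *
      (∏ i : Fin r, ∏ j ∈ Finset.univ.filter (fun j => i < j ∧ F.Adj i j), W (x i, x j)) *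
      ∏ k : Fin r, Real.exp (-(marginal μ W (x k)))
    ∂(Measure.pi fun _ => μ)

/-!
Since `|∑ₖ f(xₖ)| ≤ r ‖f‖_∞` almost everywhere, it suffices to bound
`∫ ∏_{ij ∈ E(F)} W(xᵢ,xⱼ) ∏ₖ e^{-λ(xₖ)}` by a constant depending on `F` only. Integrate out the
leaves of the forest one at a time, carrying vertex weights `λ(xₖ)^{aₖ} e^{-λ(xₖ)}`. If `u` is a
leaf hanging from `v`, then `t^a e^{-t} ≤ a!` gives
`∫ W(x_v,t) λ(t)^{a_u} e^{-λ(t)} dt ≤ a_u! λ(x_v)`, and the new factor `λ(x_v)` is absorbed by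
raising `a_v` by one. Each step removes an edge, so with `m` edges no exponent exceeds `m`, and
`|t⁺(F,f,W)| ≤ r (m!)^r ‖f‖_∞`.
-/

open ENNReal ProbabilityTheory

namespace SimpleGraph
variable {V : Type*} {G : SimpleGraph V}

lemma IsAcyclic.exists_existsUnique_adj [Finite V] (hG : G.IsAcyclic) {a b : V}
    (hab : G.Adj a b) : ∃ u, ∃! v, G.Adj u v := by
  have : Nonempty V := ⟨a⟩
  obtain ⟨u, v, p, hp, hmax⟩ := Walk.exists_isPath_forall_isPath_length_le_length G
  have hnil : ¬p.Nil := by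
    intro h
    have := hmax a b hab.toWalk (by simpa using hab.ne)
    simp [Walk.length_eq_zero_iff.mpr h] at this
  refine ⟨u, _, p.adj_snd hnil, fun w hadj ↦ hG.eq_snd_of_adj_start hp hadj ?_⟩
  by_contra hw
  simpa using hmax _ _ _ (hp.cons hw : (p.cons hadj.symm).IsPath)

lemma IsAcyclic.exists_pendant_edge [Finite V] (hG : G.IsAcyclic) {E : Set (Sym2 V)}
    (hE : E ⊆ G.edgeSet) (hne : E.Nonempty) :
    ∃ u v, s(u, v) ∈ E ∧ ∀ e ∈ E, u ∈ e → e = s(u, v) := by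
  have hH : (fromEdgeSet E).IsAcyclic := hG.anti (by simpa using Set.sdiff_subset.trans hE)
  obtain ⟨e, he⟩ := hne
  induction e using Sym2.ind with | _ a b => ?_
  obtain ⟨u, v, huv, huniq⟩ := hH.exists_existsUnique_adj
    ((fromEdgeSet_adj _).2 ⟨he, G.ne_of_adj (hE he)⟩)
  refine ⟨u, v, ((fromEdgeSet_adj _).1 huv).1, fun e he' hue ↦ ?_⟩
  obtain ⟨w, rfl⟩ := Sym2.mem_iff_exists.1 hue
  rw [huniq w ((fromEdgeSet_adj _).2 ⟨he', G.ne_of_adj (hE he')⟩)]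

lemma prod_filter_lt_adj_eq_prod_edgeFinset [Fintype V] [LinearOrder V] [DecidableRel G.Adj]
    [Fintype G.edgeSet] {M : Type*} [CommMonoid M] (w : V → V → M) (hw : ∀ i j, w i j = w j i) :
    ∏ i, ∏ j with i < j ∧ G.Adj i j, w i j = ∏ e ∈ G.edgeFinset, Sym2.lift ⟨w, hw⟩ e := by
  simp_rw [Finset.prod_filter]
  rw [← Finset.prod_product' (f := fun i j ↦ if i < j ∧ G.Adj i j then w i j else 1),
    ← Finset.prod_filter (fun p : V × V ↦ p.1 < p.2 ∧ G.Adj p.1 p.2) (fun p ↦ w p.1 p.2)]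
  refine Finset.prod_bij' (fun p _ ↦ s(p.1, p.2)) (fun e _ ↦ (e.inf, e.sup)) ?_ ?_ ?_ ?_ ?_
  all_goals simp only [Finset.mem_filter, Finset.mem_product, Finset.mem_univ, true_and]
  · exact fun p hp ↦ by simpa using hp.2
  · intro e he
    induction e using Sym2.ind with | _ a b => ?_
    rw [mem_edgeFinset, mem_edgeSet] at he
    rcases lt_or_gt_of_ne he.ne with h | h <;> simp [h, h.le, he, he.symm]
  · exact fun p hp ↦ Prod.ext (min_eq_left hp.1.le) (max_eq_right hp.1.le)
  · exact fun e _ ↦ Sym2.sortEquiv.symm_apply_apply e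
  · exact fun _ _ ↦ rfl

end SimpleGraph

section PiMeasure
variable {S ι : Type*} [MeasurableSpace S] [Fintype ι] {μ : Measure S}

lemma measurePreserving_pi_pair [IsProbabilityMeasure μ] {i j : ι} (hij : i ≠ j) :
    MeasurePreserving (fun x : ι → S ↦ (x i, x j)) (Measure.pi fun _ ↦ μ) (μ.prod μ) := by
  have hind : IndepFun (fun x : ι → S ↦ x i) (fun x ↦ x j) (Measure.pi fun _ ↦ μ) :=
    (iIndepFun_pi (X := fun _ ↦ id) fun _ ↦ aemeasurable_id).indepFun hij
  refine ⟨by fun_prop, ?_⟩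
  rw [(indepFun_iff_map_prod_eq_prod_map_map (measurable_pi_apply i).aemeasurable
      (measurable_pi_apply j).aemeasurable).1 hind,
    (measurePreserving_eval _ i).map_eq, (measurePreserving_eval _ j).map_eq]

lemma ae_pi_forall_apply [SigmaFinite μ] {P : S → Prop} (h : ∀ᵐ z ∂μ, P z) :
    ∀ᵐ x ∂Measure.pi (fun _ : ι ↦ μ), ∀ k, P (x k) :=
  ae_all_iff.2 fun k ↦ (Measure.quasiMeasurePreserving_eval _ k).ae h

lemma ae_pi_forall_pair [IsProbabilityMeasure μ] {P : S × S → Prop}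
    (h : ∀ᵐ p ∂μ.prod μ, P p) :
    ∀ᵐ x ∂Measure.pi (fun _ : ι ↦ μ), ∀ i j, i ≠ j → P (x i, x j) := by
  refine ae_all_iff.2 fun i ↦ ae_all_iff.2 fun j ↦ ?_
  by_cases hij : i = j
  · exact .of_forall fun _ h ↦ absurd hij h
  · filter_upwards [(measurePreserving_pi_pair hij).quasiMeasurePreserving.ae h] with x hx
    exact fun _ ↦ hx

end PiMeasure

lemma lmarginal_erase_of_update_eq {δ : Type*} [DecidableEq δ] {X : δ → Type*}
    [∀ i, MeasurableSpace (X i)] {μ : ∀ i, Measure (X i)} [∀ i, IsProbabilityMeasure (μ i)]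
    {s : Finset δ} {f : (∀ i, X i) → ℝ≥0∞} (hf : Measurable f) {i : δ} (hi : i ∈ s)
    (hfi : ∀ x y, f (Function.update x i y) = f x) :
    ∫⋯∫⁻_s, f ∂μ = ∫⋯∫⁻_(s.erase i), f ∂μ := by
  simp [lmarginal_erase' f hf hi, hfi]

lemma ae_abs_le_toReal_eLpNorm_top {S : Type*} [MeasurableSpace S] {μ : Measure S}
    {f : S → ℝ} {M : ℝ} (hM : ∀ x, |f x| ≤ M) :
    ∀ᵐ z ∂μ, |f z| ≤ (eLpNorm f ⊤ μ).toReal := by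
  have hfin : eLpNorm f ⊤ μ ≠ ∞ :=
    (eLpNormEssSup_lt_top_of_ae_bound (C := M) (.of_forall hM)).ne
  filter_upwards [ae_le_eLpNormEssSup (f := f) (μ := μ)] with z hz
  rw [← eLpNorm_exponent_top] at hz
  simpa using ENNReal.toReal_mono hfin hz

section Kernel
variable {S : Type*} [MeasurableSpace S] {μ : Measure S} [SFinite μ] {W : S × S → ℝ}

lemma exists_measurable_symm_ae_eq_ofReal (hW : AEStronglyMeasurable W (μ.prod μ))
    (hsymm : ∀ x y, W (x, y) = W (y, x)) :
    ∃ g : S × S → ℝ≥0∞, Measurable g ∧ (∀ x y, g (x, y) = g (y, x)) ∧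
      ∀ᵐ p ∂μ.prod μ, g p = ENNReal.ofReal (W p) := by
  set h : S × S → ℝ≥0∞ := fun p ↦ ENNReal.ofReal (hW.mk W p)
  have hh : Measurable h := ENNReal.measurable_ofReal.comp hW.stronglyMeasurable_mk.measurable
  have hae : h =ᵐ[μ.prod μ] fun p ↦ ENNReal.ofReal (W p) :=
    hW.ae_eq_mk.symm.fun_comp ENNReal.ofReal
  have hae_swap : (h ∘ Prod.swap) =ᵐ[μ.prod μ] fun p ↦ ENNReal.ofReal (W p) := by
    filter_upwards [Measure.measurePreserving_swap.quasiMeasurePreserving.ae_eq_comp hae]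
      with p hp
    simpa only [Function.comp_apply, Prod.swap, ← hsymm] using hp
  refine ⟨fun p ↦ min (h p) (h p.swap), hh.min (hh.comp measurable_swap),
    fun _ _ ↦ min_comm _ _, ?_⟩
  filter_upwards [hae, hae_swap] with p hp hp'
  simp_all

lemma ae_lintegral_eq_ofReal_marginal (hW : Integrable W (μ.prod μ)) (hWnn : ∀ p, 0 ≤ W p)
    {g : S × S → ℝ≥0∞} (hg : ∀ᵐ p ∂μ.prod μ, g p = ENNReal.ofReal (W p)) :
    ∀ᵐ z ∂μ, ∫⁻ y, g (z, y) ∂μ = ENNReal.ofReal (marginal μ W z) := by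
  filter_upwards [Measure.ae_ae_of_ae_prod hg, hW.prod_right_ae] with z hgz hWz
  rw [lintegral_congr_ae hgz, marginal,
    ofReal_integral_eq_lintegral_ofReal hWz (.of_forall fun _ ↦ hWnn _)]

end Kernel

/-- `t ^ a * exp (-t)`, extended by `0` at `t = ∞` (a marginal `∫⁻ y, g (x, y) ∂μ` may be `∞`). -/
noncomputable def powMulExpNeg (a : ℕ) (t : ℝ≥0∞) : ℝ≥0∞ :=
  if t = ∞ then 0 else ENNReal.ofReal (t.toReal ^ a * Real.exp (-t.toReal))

lemma powMulExpNeg_le_factorial (a : ℕ) (t : ℝ≥0∞) : powMulExpNeg a t ≤ a.factorial := by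
  unfold powMulExpNeg
  split_ifs
  · exact zero_le
  rw [← ENNReal.ofReal_natCast]
  refine ENNReal.ofReal_le_ofReal ?_
  have := Real.pow_div_factorial_le_exp _ t.toReal_nonneg a
  rw [div_le_iff₀ (by positivity)] at this
  rw [Real.exp_neg, ← div_eq_mul_inv, div_le_iff₀ (Real.exp_pos _)]
  linarith

lemma mul_powMulExpNeg_le (a : ℕ) (t : ℝ≥0∞) :
    t * powMulExpNeg a t ≤ powMulExpNeg (a + 1) t := by
  unfold powMulExpNeg
  split_ifs with ht
  · simp
  rw [← ENNReal.ofReal_toReal ht, ← ENNReal.ofReal_mul toReal_nonneg,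
    ENNReal.toReal_ofReal toReal_nonneg, pow_succ]
  exact le_of_eq (by ring_nf)

lemma measurable_powMulExpNeg (a : ℕ) : Measurable (powMulExpNeg a) :=
  Measurable.ite (measurableSet_singleton ∞) measurable_const (by fun_prop)

lemma powMulExpNeg_zero_ofReal {t : ℝ} (ht : 0 ≤ t) :
    powMulExpNeg 0 (ENNReal.ofReal t) = ENNReal.ofReal (Real.exp (-t)) := by
  simp [powMulExpNeg, ht]

section EdgeWeight
variable {S V : Type*} {g : S × S → ℝ≥0∞} (hgs : ∀ x y, g (x, y) = g (y, x))

def edgeWeight (x : V → S) : Sym2 V → ℝ≥0∞ :=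
  Sym2.lift ⟨fun i j ↦ g (x i, x j), fun _ _ ↦ hgs _ _⟩

variable {hgs}

lemma measurable_edgeWeight [MeasurableSpace S] (hg : Measurable g) (e : Sym2 V) :
    Measurable fun x ↦ edgeWeight hgs x e := by
  induction e using Sym2.ind with | _ i j => exact hg.comp (by fun_prop)

lemma edgeWeight_update_of_notMem [DecidableEq V] {u : V} {e : Sym2 V} (hu : u ∉ e)
    (x : V → S) (t : S) : edgeWeight hgs (Function.update x u t) e = edgeWeight hgs x e := by
  induction e using Sym2.ind with | _ i j => ?_
  simp only [Sym2.mem_iff, not_or] at hu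
  simp [edgeWeight, Function.update_of_ne (Ne.symm hu.1), Function.update_of_ne (Ne.symm hu.2)]

end EdgeWeight

section ForestIntegrand
variable {S V : Type*} [MeasurableSpace S] {g : S × S → ℝ≥0∞}
  (hgs : ∀ x y, g (x, y) = g (y, x)) (μ : Measure S)

/-- The integrand once some leaves have been integrated out: `E` are the remaining edges, `s` the
remaining vertices, and `a k` counts the removed edges at `k`. -/
noncomputable def forestIntegrand (E : Finset (Sym2 V)) (s : Finset V) (a : V → ℕ)
    (x : V → S) : ℝ≥0∞ :=
  (∏ e ∈ E, edgeWeight hgs x e) * ∏ k ∈ s, powMulExpNeg (a k) (∫⁻ y, g (x k, y) ∂μ)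

variable {hgs μ}

lemma measurable_forestIntegrand [SFinite μ] (hg : Measurable g) (E : Finset (Sym2 V))
    (s : Finset V) (a : V → ℕ) : Measurable (forestIntegrand hgs μ E s a) :=
  .mul (Finset.measurable_prod _ fun e _ ↦ measurable_edgeWeight hg e)
    (Finset.measurable_prod _ fun k _ ↦
      (measurable_powMulExpNeg _).comp (hg.lintegral_prod_right'.comp (measurable_pi_apply k)))

variable [DecidableEq V]

lemma forestIntegrand_update_of_notMem {E : Finset (Sym2 V)} {s : Finset V} {u : V}
    (hE : ∀ e ∈ E, u ∉ e) (hs : u ∉ s) (a : V → ℕ) (x : V → S) (t : S) :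
    forestIntegrand hgs μ E s a (Function.update x u t) = forestIntegrand hgs μ E s a x := by
  unfold forestIntegrand
  congr 1
  · exact Finset.prod_congr rfl fun e he ↦ edgeWeight_update_of_notMem (hE e he) x t
  · exact Finset.prod_congr rfl fun k hk ↦ by
      rw [Function.update_of_ne (ne_of_mem_of_not_mem hk hs)]

lemma forestIntegrand_eq_mul_pendant {E : Finset (Sym2 V)} {s : Finset V} {u v : V}
    (huv : s(u, v) ∈ E) (hu : u ∈ s) (a : V → ℕ) (x : V → S) :
    forestIntegrand hgs μ E s a x = forestIntegrand hgs μ (E.erase s(u, v)) (s.erase u) a x *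
      (g (x v, x u) * powMulExpNeg (a u) (∫⁻ y, g (x u, y) ∂μ)) := by
  rw [forestIntegrand, forestIntegrand, ← Finset.mul_prod_erase E _ huv,
    ← Finset.mul_prod_erase s _ hu, edgeWeight, Sym2.lift_mk, hgs]
  ring

lemma forestIntegrand_mul_le_update_succ {E : Finset (Sym2 V)} {s : Finset V} {v : V}
    (hv : v ∈ s) (a : V → ℕ) (x : V → S) :
    forestIntegrand hgs μ E s a x * ∫⁻ y, g (x v, y) ∂μ ≤
      forestIntegrand hgs μ E s (Function.update a v (a v + 1)) x := by
  rw [forestIntegrand, forestIntegrand, ← Finset.mul_prod_erase s _ hv,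
    ← Finset.mul_prod_erase s (fun k ↦ powMulExpNeg (Function.update a v (a v + 1) k) _) hv,
    Function.update_self]
  have hrest : ∏ k ∈ s.erase v, powMulExpNeg (Function.update a v (a v + 1) k)
      (∫⁻ y, g (x k, y) ∂μ) = ∏ k ∈ s.erase v, powMulExpNeg (a k) (∫⁻ y, g (x k, y) ∂μ) :=
    Finset.prod_congr rfl fun k hk ↦ by rw [Function.update_of_ne (Finset.ne_of_mem_erase hk)]
  rw [hrest]
  set Λ := ∫⁻ y, g (x v, y) ∂μ
  set P := ∏ e ∈ E, edgeWeight hgs x e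
  set Q := ∏ k ∈ s.erase v, powMulExpNeg (a k) (∫⁻ y, g (x k, y) ∂μ)
  calc P * (powMulExpNeg (a v) Λ * Q) * Λ = P * (Λ * powMulExpNeg (a v) Λ * Q) := by ring
    _ ≤ P * (powMulExpNeg (a v + 1) Λ * Q) := by gcongr; exact mul_powMulExpNeg_le _ _

lemma lintegral_forestIntegrand_update_le [SFinite μ] (hg : Measurable g)
    {E : Finset (Sym2 V)} {s : Finset V} {u v : V} (huv : s(u, v) ∈ E)
    (hu' : ∀ e ∈ E.erase s(u, v), u ∉ e) (hne : u ≠ v) (hu : u ∈ s) (hv : v ∈ s)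
    (a : V → ℕ) (x : V → S) :
    ∫⁻ t, forestIntegrand hgs μ E s a (Function.update x u t) ∂μ ≤
      (a u).factorial * forestIntegrand hgs μ (E.erase s(u, v)) (s.erase u)
        (Function.update a v (a v + 1)) x := by
  set R := forestIntegrand hgs μ (E.erase s(u, v)) (s.erase u) a x
  calc ∫⁻ t, forestIntegrand hgs μ E s a (Function.update x u t) ∂μ
      = ∫⁻ t, R * (g (x v, t) * powMulExpNeg (a u) (∫⁻ y, g (t, y) ∂μ)) ∂μ := by
        refine lintegral_congr fun t ↦ ?_
        rw [forestIntegrand_eq_mul_pendant huv hu, forestIntegrand_update_of_notMem hu'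
          (Finset.notMem_erase u s), Function.update_self, Function.update_of_ne hne.symm]
    _ ≤ ∫⁻ t, R * (g (x v, t) * (a u).factorial) ∂μ := by
        gcongr
        exact powMulExpNeg_le_factorial _ _
    _ = (a u).factorial * (R * ∫⁻ y, g (x v, y) ∂μ) := by
        rw [lintegral_const_mul _ (by fun_prop), lintegral_mul_const _ (by fun_prop)]
        ring
    _ ≤ _ := by
        gcongr
        exact forestIntegrand_mul_le_update_succ (Finset.mem_erase.2 ⟨hne.symm, hv⟩) a x

variable [Fintype V] [IsProbabilityMeasure μ]

lemma lintegral_forestIntegrand_le_pendant (hg : Measurable g) {E : Finset (Sym2 V)}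
    {s : Finset V} {u v : V} (huv : s(u, v) ∈ E) (hu' : ∀ e ∈ E.erase s(u, v), u ∉ e)
    (hne : u ≠ v) (hu : u ∈ s) (hv : v ∈ s) (a : V → ℕ) :
    ∫⁻ x, forestIntegrand hgs μ E s a x ∂Measure.pi (fun _ ↦ μ) ≤
      (a u).factorial * ∫⁻ x, forestIntegrand hgs μ (E.erase s(u, v)) (s.erase u)
        (Function.update a v (a v + 1)) x ∂Measure.pi (fun _ ↦ μ) := by
  obtain ⟨x₀⟩ : Nonempty (V → S) := have := nonempty_of_isProbabilityMeasure μ; inferInstance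
  have hmeas := measurable_forestIntegrand (V := V) (hgs := hgs) (μ := μ) hg
  rw [lintegral_eq_lmarginal_univ x₀, lintegral_eq_lmarginal_univ x₀,
    lmarginal_erase' _ (hmeas _ _ _) (Finset.mem_univ u),
    lmarginal_erase_of_update_eq (hmeas _ _ _) (Finset.mem_univ u)
      (forestIntegrand_update_of_notMem hu' (Finset.notMem_erase u s) _)]
  refine (lmarginal_mono (fun y ↦ lintegral_forestIntegrand_update_le hg huv hu' hne hu hv a y)
    x₀).trans_eq ?_
  simp only [lmarginal]
  exact lintegral_const_mul' _ _ (natCast_ne_top _)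

theorem lintegral_forestIntegrand_le (hg : Measurable g) {F : SimpleGraph V} (hF : F.IsAcyclic)
    {E : Finset (Sym2 V)} (hE : ↑E ⊆ F.edgeSet) {s : Finset V} (hs : ∀ e ∈ E, ∀ k ∈ e, k ∈ s)
    (a : V → ℕ) :
    ∫⁻ x, forestIntegrand hgs μ E s a x ∂Measure.pi (fun _ ↦ μ) ≤
      ∏ k ∈ s, ((a k + E.card).factorial : ℝ≥0∞) := by
  induction E using Finset.strongInduction generalizing s a with | H E ih => ?_
  rcases E.eq_empty_or_nonempty with rfl | hE_ne
  · calc ∫⁻ x, forestIntegrand hgs μ ∅ s a x ∂Measure.pi (fun _ ↦ μ)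
        ≤ ∫⁻ _, ∏ k ∈ s, ((a k).factorial : ℝ≥0∞) ∂Measure.pi (fun _ ↦ μ) :=
          lintegral_mono fun x ↦ by
            simpa [forestIntegrand] using
              Finset.prod_le_prod' fun k _ ↦ powMulExpNeg_le_factorial (a k) _
      _ = _ := by simp
  obtain ⟨u, v, huv, hleaf⟩ := hF.exists_pendant_edge hE (Finset.coe_nonempty.2 hE_ne)
  have hne : u ≠ v := F.ne_of_adj (hE huv)
  have hu : u ∈ s := hs _ huv u (Sym2.mem_mk_left u v)
  have hv : v ∈ s := hs _ huv v (Sym2.mem_mk_right u v)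
  have hu' : ∀ e ∈ E.erase s(u, v), u ∉ e := fun e he hue ↦
    (Finset.mem_erase.1 he).1 (hleaf e (Finset.mem_of_mem_erase he) hue)
  have hcard : (E.erase s(u, v)).card + 1 = E.card := Finset.card_erase_add_one huv
  calc ∫⁻ x, forestIntegrand hgs μ E s a x ∂Measure.pi (fun _ ↦ μ)
      ≤ (a u).factorial * ∏ k ∈ s.erase u,
          ((Function.update a v (a v + 1) k + (E.erase s(u, v)).card).factorial : ℝ≥0∞) := by
        refine (lintegral_forestIntegrand_le_pendant hg huv hu' hne hu hv a).trans ?_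
        gcongr
        refine ih _ (Finset.erase_ssubset huv) (fun e he ↦ hE (Finset.mem_of_mem_erase he))
          (fun e he k hk ↦ Finset.mem_erase.2 ⟨?_, hs e (Finset.mem_of_mem_erase he) k hk⟩) _
        rintro rfl
        exact hu' e he hk
    _ ≤ (a u + E.card).factorial * ∏ k ∈ s.erase u, ((a k + E.card).factorial : ℝ≥0∞) := by
        refine mul_le_mul' ?_ (Finset.prod_le_prod' fun k _ ↦ ?_) <;>
          refine Nat.cast_le.2 (Nat.factorial_le ?_)
        · omega
        · by_cases hkv : k = v <;> simp [hkv] <;> omega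
    _ = ∏ k ∈ s, ((a k + E.card).factorial : ℝ≥0∞) :=
        Finset.mul_prod_erase s (fun k ↦ ((a k + E.card).factorial : ℝ≥0∞)) hu

end ForestIntegrand

section TIsolPlus
variable {S : Type*} [MeasurableSpace S] {μ : Measure S} {r : ℕ} {F : SimpleGraph (Fin r)}
  [DecidableRel F.Adj] {f : S → ℝ} {W : S × S → ℝ} {g : S × S → ℝ≥0∞}
  (hgs : ∀ x y, g (x, y) = g (y, x))

lemma enorm_tIsolPlus_integrand_le (hWnn : ∀ p, 0 ≤ W p) {N : ℝ} {x : Fin r → S}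
    (hf : ∀ k, |f (x k)| ≤ N)
    (hΛ : ∀ k, ∫⁻ y, g (x k, y) ∂μ = ENNReal.ofReal (marginal μ W (x k)))
    (hgW : ∀ i j, i ≠ j → g (x i, x j) = ENNReal.ofReal (W (x i, x j))) :
    ‖(∑ k, f (x k)) *
        (∏ i, ∏ j ∈ Finset.univ.filter (fun j ↦ i < j ∧ F.Adj i j), W (x i, x j)) *
        ∏ k, Real.exp (-marginal μ W (x k))‖ₑ ≤
      ENNReal.ofReal (r * N) * forestIntegrand hgs μ F.edgeFinset Finset.univ 0 x := by
  have hsum : |∑ k, f (x k)| ≤ r * N := by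
    calc |∑ k, f (x k)| ≤ ∑ k, |f (x k)| := Finset.abs_sum_le_sum_abs _ _
      _ ≤ ∑ _k : Fin r, N := Finset.sum_le_sum fun k _ ↦ hf k
      _ = r * N := by simp
  have hedges : ENNReal.ofReal
      (∏ i, ∏ j ∈ Finset.univ.filter (fun j ↦ i < j ∧ F.Adj i j), W (x i, x j)) =
      ∏ e ∈ F.edgeFinset, edgeWeight hgs x e := by
    rw [edgeWeight, ← SimpleGraph.prod_filter_lt_adj_eq_prod_edgeFinset,
      ENNReal.ofReal_prod_of_nonneg fun _ _ ↦ Finset.prod_nonneg fun _ _ ↦ hWnn _]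
    refine Finset.prod_congr rfl fun i _ ↦ ?_
    rw [ENNReal.ofReal_prod_of_nonneg fun _ _ ↦ hWnn _]
    refine Finset.prod_congr rfl fun j hj ↦ (hgW i j (Finset.mem_filter.1 hj).2.1.ne).symm
  have hvertices : ENNReal.ofReal (∏ k, Real.exp (-marginal μ W (x k))) =
      ∏ k, powMulExpNeg ((0 : Fin r → ℕ) k) (∫⁻ y, g (x k, y) ∂μ) := by
    rw [ENNReal.ofReal_prod_of_nonneg fun _ _ ↦ (Real.exp_pos _).le]
    refine Finset.prod_congr rfl fun k _ ↦ ?_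
    have hmarg : 0 ≤ marginal μ W (x k) := integral_nonneg fun _ ↦ hWnn _
    rw [hΛ, Pi.zero_apply, powMulExpNeg_zero_ofReal hmarg]
  have hedges_nonneg : 0 ≤ ∏ i, ∏ j ∈ Finset.univ.filter (fun j ↦ i < j ∧ F.Adj i j),
      W (x i, x j) := Finset.prod_nonneg fun _ _ ↦ Finset.prod_nonneg fun _ _ ↦ hWnn _
  have hvertices_nonneg : 0 ≤ ∏ k, Real.exp (-marginal μ W (x k)) :=
    Finset.prod_nonneg fun _ _ ↦ (Real.exp_pos _).le
  rw [forestIntegrand, ← hedges, ← hvertices, ← ENNReal.ofReal_mul hedges_nonneg,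
    ← ENNReal.ofReal_mul ((abs_nonneg _).trans hsum), Real.enorm_eq_ofReal_abs, abs_mul, abs_mul,
    abs_of_nonneg hedges_nonneg, abs_of_nonneg hvertices_nonneg, mul_assoc]
  gcongr

lemma ofReal_abs_tIsolPlus_le [IsProbabilityMeasure μ] (hW : Integrable W (μ.prod μ))
    (hWnn : ∀ p, 0 ≤ W p) (hgW : ∀ᵐ p ∂μ.prod μ, g p = ENNReal.ofReal (W p)) {N : ℝ}
    (hf : ∀ᵐ z ∂μ, |f z| ≤ N) :
    ENNReal.ofReal |tIsolPlus μ F f W| ≤ ENNReal.ofReal (r * N) *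
      ∫⁻ x, forestIntegrand hgs μ F.edgeFinset Finset.univ 0 x ∂Measure.pi fun _ ↦ μ := by
  rw [← Real.enorm_eq_ofReal_abs, ← lintegral_const_mul' _ _ ofReal_ne_top]
  refine (enorm_integral_le_lintegral_enorm _).trans (lintegral_mono_ae ?_)
  filter_upwards [ae_pi_forall_apply hf,
    ae_pi_forall_apply (ae_lintegral_eq_ofReal_marginal hW hWnn hgW), ae_pi_forall_pair hgW]
    with x hfx hΛx hgWx
  exact enorm_tIsolPlus_integrand_le hgs hWnn hfx hΛx hgWx

end TIsolPlus

/-- For every tree `F` on `{1,…,r}` there is a constant `C` (depending only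
on `F`) such that for every probability space `(S,μ)`, every integrable symmetric
non-negative kernel `W`, and every bounded measurable `f`, one has
`|t⁺(F,f,W)| ≤ C ⬝ ‖f‖_∞`. -/
theorem tIsolPlus_bounded {r : ℕ} (F : SimpleGraph (Fin r)) [DecidableRel F.Adj]
    (hF : F.IsTree) :
    ∃ C : ℝ, ∀ (S : Type) [MeasurableSpace S], ∀ (μ : Measure S),
      IsProbabilityMeasure μ →
      ∀ W : S × S → ℝ, Integrable W (μ.prod μ) →
        (∀ x y, W (x, y) = W (y, x)) → (∀ p, 0 ≤ W p) →
      ∀ f : S → ℝ, Measurable f → (∃ M : ℝ, ∀ x, |f x| ≤ M) →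
      |tIsolPlus μ F f W| ≤ C * (eLpNorm f ⊤ μ).toReal := by
  set m := F.edgeFinset.card
  refine ⟨r * (m.factorial : ℝ) ^ r, fun S _ μ _ W hW hWsymm hWnn f _ ⟨M, hM⟩ ↦ ?_⟩
  obtain ⟨g, hg, hgs, hgW⟩ := exists_measurable_symm_ae_eq_ofReal hW.1 hWsymm
  have hforest := lintegral_forestIntegrand_le (hgs := hgs) (μ := μ) hg hF.isAcyclic
    F.coe_edgeFinset.subset (s := Finset.univ) (fun _ _ k _ ↦ Finset.mem_univ k) 0
  have h := (ofReal_abs_tIsolPlus_le hgs hW hWnn hgW (ae_abs_le_toReal_eLpNorm_top hM)).trans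
    (mul_le_mul_right hforest _)
  have hN : 0 ≤ (eLpNorm f ⊤ μ).toReal := toReal_nonneg
  rw [show ∏ k : Fin r, (((0 : Fin r → ℕ) k + m).factorial : ℝ≥0∞) =
      ENNReal.ofReal ((m.factorial : ℝ) ^ r) by simp, ← ENNReal.ofReal_mul (by positivity),
    ENNReal.ofReal_le_ofReal_iff (by positivity)] at h
  linarith
end

section
/- Let κ₁ and κ₂ be integrable symmetric non-negative kernels on [0,1] (with Lebesgue measure μ) and let δ ∈ [0,1]. Then |m_δ(κ₁) − m_δ(κ₂)| ≤ d_□(κ₁,κ₂), where m_δ(κ) = sup over measurable sets A ⊆ [0,1] with μ(A) ≤ δ of ∫_{A×[0,1]} κ(x,y) dμ(x) dμ(y), and d_□ is the cut metric. -/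
open MeasureTheory

/-- Lebesgue measure restricted to `[0,1]`. -/
noncomputable def μ01 : Measure ℝ := volume.restrict (Set.Icc 0 1)

/-- The cut norm of a function `U : ℝ × ℝ → ℝ` with respect to Lebesgue measure on `[0,1]`:
the supremum of `|∫∫ f(x) U(x,y) g(y) dμ dμ|` over measurable `f, g` bounded by `1`. -/
noncomputable def cutNorm (U : ℝ × ℝ → ℝ) : ℝ :=
  sSup { r : ℝ | ∃ f g : ℝ → ℝ, Measurable f ∧ Measurable g ∧
    (∀ x, |f x| ≤ 1) ∧ (∀ x, |g x| ≤ 1) ∧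
    r = |∫ x, (∫ y, f x * U (x, y) * g y ∂μ01) ∂μ01| }

/-- `τ` is a measure-preserving bijection of `[0,1]` (up to null sets). -/
def IsRearrangementMap (τ : ℝ → ℝ) : Prop :=
  MeasurePreserving τ μ01 μ01 ∧
    ∃ N₁ N₂ : Set ℝ, μ01 N₁ = 0 ∧ μ01 N₂ = 0 ∧
      Set.BijOn τ (Set.Icc 0 1 \ N₁) (Set.Icc 0 1 \ N₂)

/-- The cut metric `d_□(κ₁,κ₂) = inf_τ ‖κ₁ − κ₂^τ‖_□`, the infimum over all rearrangements
`κ₂^τ(x,y) = κ₂(τ(x),τ(y))` of `κ₂` by measure-preserving bijections of `[0,1]`. -/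
noncomputable def cutDist (κ₁ κ₂ : ℝ × ℝ → ℝ) : ℝ :=
  sInf { d : ℝ | ∃ τ : ℝ → ℝ, IsRearrangementMap τ ∧
    d = cutNorm (fun p => κ₁ p - κ₂ (τ p.1, τ p.2)) }

/-- `m_δ(κ)`: the supremum of `∫_{A×[0,1]} κ dμ dμ` over measurable `A ⊆ [0,1]` with
`μ(A) ≤ δ`. -/
noncomputable def mRestr (δ : ℝ) (κ : ℝ × ℝ → ℝ) : ℝ :=
  sSup { r : ℝ | ∃ A : Set ℝ, MeasurableSet A ∧ A ⊆ Set.Icc 0 1 ∧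
    μ01 A ≤ ENNReal.ofReal δ ∧
    r = ∫ x in A, (∫ y, κ (x, y) ∂μ01) ∂μ01 }

/-!
Testing the cut norm of `κ - κ'` against `f = 𝟙_A`, `g = 1` shows that
`∫_{A×[0,1]} κ` and `∫_{A×[0,1]} κ'` differ by at most `‖κ - κ'‖_□`, so `m_δ` is
1-Lipschitz for the cut norm. It remains to see that `m_δ` is invariant under rearrangements.
Preimages under a measure-preserving `τ` preserve both the measure of a set and the integral of
the degree function `x ↦ ∫ κ(x, y) dy`; conversely, since `τ` is injective off a null set, every
measurable `A` agrees a.e. with `τ⁻¹(τ(A))`, and `τ(A)` is measurable by the Lusin–Souslin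
theorem.
-/

open Set

instance : IsProbabilityMeasure μ01 := ⟨by simp [μ01]⟩

namespace MeasureTheory.MeasurePreserving

variable {α β E : Type*} [MeasurableSpace α] [MeasurableSpace β]
  [NormedAddCommGroup E] {μ : Measure α} {ν : Measure β} {τ : α → β}
  {g : β → E}

theorem integral_comp_of_aestronglyMeasurable [NormedSpace ℝ E] (hτ : MeasurePreserving τ μ ν)
    (hg : AEStronglyMeasurable g ν) : ∫ x, g (τ x) ∂μ = ∫ y, g y ∂ν := by
  rw [← hτ.map_eq] at hg ⊢
  exact (integral_map hτ.measurable.aemeasurable hg).symm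

theorem setIntegral_preimage [NormedSpace ℝ E] (hτ : MeasurePreserving τ μ ν)
    (hg : AEStronglyMeasurable g ν) {s : Set β} (hs : MeasurableSet s) : ∫ x in τ ⁻¹' s, g (τ x) ∂μ = ∫ y in s, g y ∂ν := by
  rw [← hτ.map_eq] at hg ⊢
  exact (setIntegral_map hs hg hτ.measurable.aemeasurable).symm

theorem integrable_comp_prodMap [SFinite μ] (hτ : MeasurePreserving τ μ ν) {κ : β × β → E}
    (hκ : Integrable κ (ν.prod ν)) : Integrable (fun p => κ (τ p.1, τ p.2)) (μ.prod μ) :=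
  (hτ.prod hτ).integrable_comp_of_integrable hκ

end MeasureTheory.MeasurePreserving

noncomputable def kernelDegree (κ : ℝ × ℝ → ℝ) (x : ℝ) : ℝ := ∫ y, κ (x, y) ∂μ01

theorem integrable_kernelDegree {κ : ℝ × ℝ → ℝ} (hκ : Integrable κ (μ01.prod μ01)) :
    Integrable (kernelDegree κ) μ01 :=
  hκ.integral_prod_left

theorem kernelDegree_sub {κ κ' : ℝ × ℝ → ℝ} (hκ : Integrable κ (μ01.prod μ01))
    (hκ' : Integrable κ' (μ01.prod μ01)) :
    kernelDegree (fun p => κ p - κ' p) =ᵐ[μ01] kernelDegree κ - kernelDegree κ' := by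
  filter_upwards [hκ.prod_right_ae, hκ'.prod_right_ae] with x hx hx'
  exact integral_sub hx hx'

theorem kernelDegree_comp_ae_eq {κ : ℝ × ℝ → ℝ} (hκ : Integrable κ (μ01.prod μ01)) {τ : ℝ → ℝ}
    (hτ : MeasurePreserving τ μ01 μ01) :
    kernelDegree (fun p => κ (τ p.1, τ p.2)) =ᵐ[μ01] kernelDegree κ ∘ τ := by
  refine ae_of_ae_map hτ.measurable.aemeasurable
    (p := fun z => ∫ y, κ (z, τ y) ∂μ01 = kernelDegree κ z) ?_
  rw [hτ.map_eq]
  filter_upwards [hκ.aestronglyMeasurable.prodMk_left] with z hz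
  exact hτ.integral_comp_of_aestronglyMeasurable hz

theorem setIntegral_kernelDegree_comp {κ : ℝ × ℝ → ℝ} (hκ : Integrable κ (μ01.prod μ01))
    {τ : ℝ → ℝ} (hτ : MeasurePreserving τ μ01 μ01) {A B : Set ℝ} (hB : MeasurableSet B)
    (hAB : A =ᵐ[μ01] τ ⁻¹' B) :
    ∫ x in A, kernelDegree (fun p => κ (τ p.1, τ p.2)) x ∂μ01 =
      ∫ x in B, kernelDegree κ x ∂μ01 := by
  rw [setIntegral_congr_set hAB, ← hτ.setIntegral_preimage (integrable_kernelDegree hκ).1 hB]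
  exact integral_congr_ae (ae_restrict_of_ae (kernelDegree_comp_ae_eq hκ hτ))

section mRestr

variable {δ : ℝ} {κ : ℝ × ℝ → ℝ}

theorem setIntegral_kernelDegree_le_mRestr (hκ : Integrable κ (μ01.prod μ01)) {A : Set ℝ}
    (hA : MeasurableSet A) (hA01 : A ⊆ Icc 0 1) (hAδ : μ01 A ≤ ENNReal.ofReal δ) :
    ∫ x in A, kernelDegree κ x ∂μ01 ≤ mRestr δ κ := by
  refine le_csSup ⟨∫ x, |kernelDegree κ x| ∂μ01, ?_⟩ ⟨A, hA, hA01, hAδ, rfl⟩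
  rintro r ⟨A, -, -, -, rfl⟩
  have hd := integrable_kernelDegree hκ
  calc ∫ x in A, kernelDegree κ x ∂μ01 ≤ ∫ x in A, |kernelDegree κ x| ∂μ01 :=
        integral_mono hd.integrableOn hd.abs.integrableOn fun x => le_abs_self _
    _ ≤ ∫ x, |kernelDegree κ x| ∂μ01 :=
        setIntegral_le_integral hd.abs (.of_forall fun x => abs_nonneg _)

theorem mRestr_le {c : ℝ} (h : ∀ A : Set ℝ, MeasurableSet A → A ⊆ Icc 0 1 →
      μ01 A ≤ ENNReal.ofReal δ → ∫ x in A, kernelDegree κ x ∂μ01 ≤ c) :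
    mRestr δ κ ≤ c := by
  refine csSup_le ⟨0, ∅, .empty, empty_subset _, by simp, by simp⟩ ?_
  rintro r ⟨A, hA, hA01, hAδ, rfl⟩
  exact h A hA hA01 hAδ

end mRestr

theorem inter_Icc_ae_eq (s : Set ℝ) : (s ∩ Icc 0 1 : Set ℝ) =ᵐ[μ01] s := by
  refine Filter.eventuallyEq_set.2 ?_
  filter_upwards [ae_restrict_mem (μ := volume) measurableSet_Icc] with x hx
  simp only [mem_inter_iff, hx, and_true]

theorem IsRearrangementMap.exists_ae_eq_preimage {τ : ℝ → ℝ} (hτ : IsRearrangementMap τ)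
    {A : Set ℝ} (hA : MeasurableSet A) :
    ∃ B, MeasurableSet B ∧ B ⊆ Icc 0 1 ∧ A =ᵐ[μ01] τ ⁻¹' B := by
  obtain ⟨hmp, N, _, hN, -, hbij⟩ := hτ
  set S : Set ℝ := Icc 0 1 \ toMeasurable μ01 N
  have hSm : MeasurableSet S := measurableSet_Icc.diff (measurableSet_toMeasurable _ _)
  have hSN : S ⊆ Icc 0 1 \ N := sdiff_subset_sdiff_right (subset_toMeasurable _ _)
  have hinj : InjOn τ S := hbij.injOn.mono hSN
  have hS : ∀ᵐ x ∂μ01, x ∈ S := by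
    filter_upwards [ae_restrict_mem (μ := volume) measurableSet_Icc,
      measure_eq_zero_iff_ae_notMem.1 ((measure_toMeasurable N).trans hN)] with x hx hxN
    exact ⟨hx, hxN⟩
  refine ⟨τ '' (A ∩ S), (hA.inter hSm).image_of_measurable_injOn hmp.measurable
    (hinj.mono inter_subset_right), ?_, ?_⟩
  · rintro _ ⟨x, hx, rfl⟩
    exact (hbij.mapsTo (hSN hx.2)).1
  · refine Filter.eventuallyEq_set.2 ?_
    filter_upwards [hS] with x hx
    exact ⟨fun hxA => ⟨x, ⟨hxA, hx⟩, rfl⟩,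
      fun ⟨y, ⟨hyA, hy⟩, hxy⟩ => hinj hy hx hxy ▸ hyA⟩

theorem IsRearrangementMap.mRestr_comp {τ : ℝ → ℝ} (hτ : IsRearrangementMap τ)
    {κ : ℝ × ℝ → ℝ} (hκ : Integrable κ (μ01.prod μ01)) (δ : ℝ) :
    mRestr δ (fun p => κ (τ p.1, τ p.2)) = mRestr δ κ := by
  have hκτ : Integrable (fun p => κ (τ p.1, τ p.2)) (μ01.prod μ01) :=
    hτ.1.integrable_comp_prodMap hκ
  have measure_eq {A B : Set ℝ} (hB : MeasurableSet B) (hAB : A =ᵐ[μ01] τ ⁻¹' B) :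
      μ01 A = μ01 B :=
    (measure_congr hAB).trans (hτ.1.measure_preimage hB.nullMeasurableSet)
  refine le_antisymm (mRestr_le fun A hA _ hAδ => ?_) (mRestr_le fun B hB _ hBδ => ?_)
  · obtain ⟨B, hB, hB01, hAB⟩ := hτ.exists_ae_eq_preimage hA
    rw [setIntegral_kernelDegree_comp hκ hτ.1 hB hAB]
    exact setIntegral_kernelDegree_le_mRestr hκ hB hB01 (measure_eq hB hAB ▸ hAδ)
  · have hAB := inter_Icc_ae_eq (τ ⁻¹' B)
    rw [← setIntegral_kernelDegree_comp hκ hτ.1 hB hAB]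
    exact setIntegral_kernelDegree_le_mRestr hκτ ((hτ.1.measurable hB).inter measurableSet_Icc)
      inter_subset_right (measure_eq hB hAB ▸ hBδ)

theorem abs_integral_integral_mul_le {α β : Type*} [MeasurableSpace α] [MeasurableSpace β]
    {μ : Measure α} {ν : Measure β} [SFinite μ] [SFinite ν] {U : α × β → ℝ}
    (hU : Integrable U (μ.prod ν))
    {f : α → ℝ} {g : β → ℝ} (hf : ∀ x, |f x| ≤ 1) (hg : ∀ y, |g y| ≤ 1) :
    |∫ x, ∫ y, f x * U (x, y) * g y ∂ν ∂μ| ≤ ∫ x, ∫ y, |U (x, y)| ∂ν ∂μ := by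
  rw [← Real.norm_eq_abs]
  refine norm_integral_le_of_norm_le hU.integral_norm_prod_left ?_
  filter_upwards [hU.prod_right_ae] with x hx
  refine norm_integral_le_of_norm_le hx.norm (.of_forall fun y => ?_)
  simpa only [norm_mul, Real.norm_eq_abs, one_mul, mul_one] using
    mul_le_mul (mul_le_of_le_one_left (abs_nonneg _) (hf x)) (hg y)
    (abs_nonneg _) (abs_nonneg _)

theorem abs_integral_integral_mul_le_cutNorm {U : ℝ × ℝ → ℝ}
    (hU : Integrable U (μ01.prod μ01)) {f g : ℝ → ℝ} (hfm : Measurable f) (hgm : Measurable g)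
    (hf : ∀ x, |f x| ≤ 1) (hg : ∀ y, |g y| ≤ 1) :
    |∫ x, ∫ y, f x * U (x, y) * g y ∂μ01 ∂μ01| ≤ cutNorm U := by
  refine le_csSup ⟨∫ x, ∫ y, |U (x, y)| ∂μ01 ∂μ01, ?_⟩ ⟨f, g, hfm, hgm, hf, hg, rfl⟩
  rintro r ⟨f, g, -, -, hf, hg, rfl⟩
  exact abs_integral_integral_mul_le hU hf hg

theorem cutNorm_neg (U : ℝ × ℝ → ℝ) : cutNorm (fun p => -U p) = cutNorm U := by
  unfold cutNorm
  congr 1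
  ext r
  constructor <;> rintro ⟨f, g, hfm, hgm, hf, hg, rfl⟩ <;>
    refine ⟨fun x => -f x, g, hfm.neg, hgm, fun x => (abs_neg (f x)).trans_le (hf x), hg, ?_⟩ <;>
    simp only [neg_mul, mul_neg, neg_neg, integral_neg, abs_neg]

theorem cutNorm_sub_comm (κ κ' : ℝ × ℝ → ℝ) :
    cutNorm (fun p => κ p - κ' p) = cutNorm (fun p => κ' p - κ p) := by
  simpa only [neg_sub] using (cutNorm_neg fun p => κ p - κ' p).symm

theorem setIntegral_kernelDegree_sub_le_cutNorm {κ κ' : ℝ × ℝ → ℝ}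
    (hκ : Integrable κ (μ01.prod μ01)) (hκ' : Integrable κ' (μ01.prod μ01)) {A : Set ℝ}
    (hA : MeasurableSet A) :
    ∫ x in A, kernelDegree κ x ∂μ01 - ∫ x in A, kernelDegree κ' x ∂μ01 ≤
      cutNorm (fun p => κ p - κ' p) := by
  have h := abs_integral_integral_mul_le_cutNorm (hκ.sub hκ') (measurable_one.indicator hA)
    (measurable_const (a := (1 : ℝ))) (fun x => by by_cases hx : x ∈ A <;> simp [hx])
    (fun _ => by simp)
  have hA_eq : ∫ x, ∫ y, A.indicator 1 x * (κ (x, y) - κ' (x, y)) * 1 ∂μ01 ∂μ01 =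
      ∫ x in A, kernelDegree κ x ∂μ01 - ∫ x in A, kernelDegree κ' x ∂μ01 := by
    rw [← integral_sub (integrable_kernelDegree hκ).integrableOn
      (integrable_kernelDegree hκ').integrableOn, ← integral_indicator hA]
    refine integral_congr_ae ?_
    filter_upwards [kernelDegree_sub hκ hκ'] with x hx
    by_cases hxA : x ∈ A
    · simpa [hxA, kernelDegree] using hx
    · simp [hxA]
  exact hA_eq ▸ le_of_abs_le h

theorem mRestr_le_mRestr_add_cutNorm {κ κ' : ℝ × ℝ → ℝ} (hκ : Integrable κ (μ01.prod μ01))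
    (hκ' : Integrable κ' (μ01.prod μ01)) (δ : ℝ) :
    mRestr δ κ ≤ mRestr δ κ' + cutNorm (fun p => κ p - κ' p) :=
  mRestr_le fun A hA hA01 hAδ => by
    linarith [setIntegral_kernelDegree_le_mRestr hκ' hA hA01 hAδ,
      setIntegral_kernelDegree_sub_le_cutNorm hκ hκ' hA]

theorem abs_mRestr_sub_le_cutNorm {κ κ' : ℝ × ℝ → ℝ} (hκ : Integrable κ (μ01.prod μ01))
    (hκ' : Integrable κ' (μ01.prod μ01)) (δ : ℝ) :
    |mRestr δ κ - mRestr δ κ'| ≤ cutNorm (fun p => κ p - κ' p) := by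
  rw [abs_sub_le_iff]
  constructor
  · linarith [mRestr_le_mRestr_add_cutNorm hκ hκ' δ]
  · linarith [mRestr_le_mRestr_add_cutNorm hκ' hκ δ, cutNorm_sub_comm κ κ']

theorem isRearrangementMap_id : IsRearrangementMap id :=
  ⟨.id μ01, ∅, ∅, measure_empty, measure_empty, by simpa using bijOn_id (Icc (0 : ℝ) 1)⟩

theorem abs_mRestr_sub_le_cutDist_general (κ₁ κ₂ : ℝ × ℝ → ℝ)
    (h₁int : Integrable κ₁ (μ01.prod μ01)) (h₂int : Integrable κ₂ (μ01.prod μ01))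
    (δ : ℝ) :
    |mRestr δ κ₁ - mRestr δ κ₂| ≤ cutDist κ₁ κ₂ := by
  refine le_csInf ⟨_, id, isRearrangementMap_id, rfl⟩ ?_
  rintro d ⟨τ, hτ, rfl⟩
  rw [← hτ.mRestr_comp h₂int δ]
  exact abs_mRestr_sub_le_cutNorm h₁int (hτ.1.integrable_comp_prodMap h₂int) δ

/-- For integrable symmetric non-negative kernels `κ₁, κ₂` on `[0,1]` and
`δ ∈ [0,1]`, we have `|m_δ(κ₁) − m_δ(κ₂)| ≤ d_□(κ₁,κ₂)`. -/
theorem abs_mRestr_sub_le_cutDist (κ₁ κ₂ : ℝ × ℝ → ℝ)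
    (h₁int : Integrable κ₁ (μ01.prod μ01)) (h₂int : Integrable κ₂ (μ01.prod μ01))
    (h₁symm : ∀ x y, κ₁ (x, y) = κ₁ (y, x)) (h₂symm : ∀ x y, κ₂ (x, y) = κ₂ (y, x))
    (h₁nn : ∀ p, 0 ≤ κ₁ p) (h₂nn : ∀ p, 0 ≤ κ₂ p)
    (δ : ℝ) (hδ : δ ∈ Set.Icc (0 : ℝ) 1) :
    |mRestr δ κ₁ - mRestr δ κ₂| ≤ cutDist κ₁ κ₂ :=
  abs_mRestr_sub_le_cutDist_general κ₁ κ₂ h₁int h₂int δ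
end
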